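/- arXiv:1904.06019 — 3 statements merged into one kernel-verified Lean document; each statement's English description precedes it below -/
import Mathlib

section
/- If V_1, ..., V_{n+1} are exchangeable real-valued random variables such that ties among V_1,...,V_{n+1} occur with probability zero, then for any β ∈ (0,1), the probability that V_{n+1} ≤ Quantile(β; {V_1,...,V_n} ∪ {∞}) is at most β + 1/(n+1). -/
open MeasureTheory Set

/-- Level-β quantile of a measure on the extended reals. -/
noncomputable def quantileE (β : ℝ) (F : Measure EReal) : EReal :=
  sInf {z : EReal | ENNReal.ofReal β ≤ F (Set.Iic z)}

/-- Weighted discrete measure on the extended reals, with weights `p` on atoms `v`. -/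
noncomputable def wEmp {m : ℕ} (p : Fin m → ℝ) (v : Fin m → EReal) : Measure EReal :=
  ∑ i, ENNReal.ofReal (p i) • Measure.dirac (v i)

/-- Empirical (uniform) measure on the atoms `v`. -/
noncomputable def empE {m : ℕ} (v : Fin m → EReal) : Measure EReal :=
  wEmp (fun _ => 1 / m) v


/-! With `k = ⌈β (n+1)⌉`, if `V (last n)` lies at or below the quantile of `{V_1, …, V_n, ⊤}`,
then fewer than `k` of the `V_i` lie strictly below it: its rank among all `n + 1` values is
less than `k`. Without ties the ranks are distinct, so at most `k` indices have rank below `k`,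
and by exchangeability every index does so with the same probability. Hence that probability is
at most `k / (n + 1) ≤ β + 1 / (n + 1)`. -/

open Finset
open scoped ENNReal

noncomputable def rank {ι α : Type*} [Fintype ι] [LinearOrder α] (x : ι → α) (j : ι) : ℕ :=
  #{i | x i < x j}

section Rank

variable {ι α : Type*} [Fintype ι] [LinearOrder α]

lemma rank_lt_rank {x : ι → α} {a b : ι} (h : x a < x b) : rank x a < rank x b := by
  refine card_lt_card ((Finset.ssubset_iff_of_subset fun i hi => ?_).2 ⟨a, ?_, ?_⟩)
  · simp only [mem_filter, Finset.mem_univ, true_and] at hi ⊢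
    exact hi.trans h
  · simpa using h
  · simp

lemma rank_injective {x : ι → α} (hx : Function.Injective x) : Function.Injective (rank x) := by
  intro a b hab
  rcases lt_trichotomy (x a) (x b) with h | h | h
  · exact absurd hab (rank_lt_rank h).ne
  · exact hx h
  · exact absurd hab (rank_lt_rank h).ne'

lemma card_rank_lt_le {x : ι → α} (hx : Function.Injective x) (k : ℕ) :
    #{j | rank x j < k} ≤ k := by
  simpa using card_le_card_of_injOn (t := range k) (rank x) (fun j hj => by simpa using hj)
    (rank_injective hx).injOn

lemma rank_comp_perm (x : ι → α) (σ : Equiv.Perm ι) (j : ι) :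
    rank (fun i => x (σ i)) j = rank x (σ j) :=
  card_equiv σ fun i => by simp

lemma rank_last {n : ℕ} (x : Fin (n + 1) → α) :
    rank x (Fin.last n) = #{j : Fin n | x j.castSucc < x (Fin.last n)} := by
  rw [rank, card_filter, Fin.sum_univ_castSucc, card_filter]
  simp

end Rank

lemma le_empE_Iic_iff {m : ℕ} [NeZero m] (β : ℝ) (w : Fin m → EReal) (z : EReal) :
    ENNReal.ofReal β ≤ empE w (Iic z) ↔ ⌈β * m⌉₊ ≤ #{i | w i ≤ z} := by
  have hm : (0 : ℝ) < m := by simpa using NeZero.pos m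
  have hmass : empE w (Iic z) = ENNReal.ofReal (#{i | w i ≤ z} / m) := by
    simp only [empE, wEmp, Measure.finsetSum_apply, Measure.smul_apply,
      Measure.dirac_apply' _ measurableSet_Iic, Set.indicator_apply, Set.mem_Iic, smul_eq_mul,
      mul_ite, Pi.one_apply, mul_one, mul_zero]
    rw [sum_ite, sum_const_zero, add_zero, sum_const, nsmul_eq_mul,
      div_eq_mul_one_div (#_ : ℝ), ENNReal.ofReal_mul (Nat.cast_nonneg _), ENNReal.ofReal_natCast]
  rw [hmass, ENNReal.ofReal_le_ofReal_iff (by positivity), Nat.ceil_le, le_div_iff₀ hm]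

lemma quantileE_empE_le {m : ℕ} [NeZero m] {β : ℝ} {w : Fin m → EReal} {z : EReal}
    (h : ⌈β * m⌉₊ ≤ #{i | w i ≤ z}) : quantileE β (empE w) ≤ z :=
  sInf_le ((le_empE_Iic_iff β w z).2 h)

lemma quantileE_empE_snoc_top_lt {n : ℕ} {β : ℝ} {v : Fin n → ℝ} {t : ℝ}
    (h : ⌈β * (n + 1 : ℕ)⌉₊ ≤ #{j | v j < t}) :
    quantileE β (empE (Fin.snoc (fun j => (v j : EReal)) ⊤)) < t := by
  set S : Finset (Fin n) := {j | v j < t}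
  -- the largest atom below `t` (`⊥` if there is none) already carries the required mass
  set z : EReal := S.sup fun j => (v j : EReal)
  have hzt : z < t := (Finset.sup_lt_iff (EReal.bot_lt_coe t)).2 fun j hj =>
    EReal.coe_lt_coe_iff.2 (mem_filter.1 hj).2
  have hS : #S ≤ #{i | (Fin.snoc (fun j => (v j : EReal)) ⊤ : Fin (n + 1) → EReal) i ≤ z} :=
    card_le_card_of_injOn Fin.castSucc (fun j hj => by
      simp only [coe_filter, Set.mem_ofPred_eq, Finset.mem_univ, true_and, Fin.snoc_castSucc]
      exact le_sup (f := fun j => (v j : EReal)) hj)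
      (Fin.castSucc_injective n).injOn
  exact (quantileE_empE_le (h.trans hS)).trans_lt hzt

lemma rank_last_lt_of_le_quantileE {n : ℕ} {β : ℝ} {x : Fin (n + 1) → ℝ}
    (h : (x (Fin.last n) : EReal) ≤
      quantileE β (empE (Fin.snoc (fun j : Fin n => (x j.castSucc : EReal)) ⊤))) :
    rank x (Fin.last n) < ⌈β * (n + 1 : ℕ)⌉₊ := by
  rw [rank_last]
  by_contra! hk
  exact (quantileE_empE_snoc_top_lt hk).not_ge h

lemma natCeil_div_le_ofReal (β : ℝ) {m : ℕ} (hm : 0 < m) :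
    (⌈β * m⌉₊ : ℝ≥0∞) / m ≤ ENNReal.ofReal (β + 1 / m) := by
  have hm' : (0 : ℝ) < m := by exact_mod_cast hm
  rcases le_or_gt β 0 with hβ | hβ
  · simp [Nat.ceil_eq_zero.2 (mul_nonpos_of_nonpos_of_nonneg hβ hm'.le)]
  rw [← ENNReal.ofReal_natCast, ← ENNReal.ofReal_natCast m, ← ENNReal.ofReal_div_of_pos hm']
  refine ENNReal.ofReal_le_ofReal ?_
  rw [div_le_iff₀ hm', add_mul, one_div_mul_cancel hm'.ne']
  exact (Nat.ceil_lt_add_one (by positivity)).le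

section Exchangeable

variable {ι : Type*} [Fintype ι]

lemma measurable_rank (j : ι) : Measurable fun x : ι → ℝ => rank x j := by
  simp only [rank, card_filter]
  exact Finset.measurable_sum _ fun i _ =>
    Measurable.ite (measurableSet_lt (measurable_pi_apply i) (measurable_pi_apply j))
      measurable_const measurable_const

lemma measurableSet_rank_lt (j : ι) (k : ℕ) : MeasurableSet {x : ι → ℝ | rank x j < k} :=
  measurable_rank j measurableSet_Iio

lemma measurableSet_exists_ne_eq : MeasurableSet {x : ι → ℝ | ∃ i j, i ≠ j ∧ x i = x j} := by
  simp only [Set.ofPred_exists]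
  exact .iUnion fun i => .iUnion fun j => (MeasurableSet.const (i ≠ j)).inter
    (measurableSet_eq_fun (measurable_pi_apply i) (measurable_pi_apply j))

lemma measure_rank_lt_eq [DecidableEq ι] {μ : Measure (ι → ℝ)}
    (hμ : ∀ σ : Equiv.Perm ι, μ.map (fun x i => x (σ i)) = μ) (i j : ι) (k : ℕ) :
    μ {x | rank x i < k} = μ {x | rank x j < k} := by
  have hσ : Measurable fun (x : ι → ℝ) l => x (Equiv.swap i j l) :=
    measurable_pi_lambda _ fun l => measurable_pi_apply _
  calc μ {x | rank x i < k} = μ.map (fun x l => x (Equiv.swap i j l)) {x | rank x i < k} := by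
        rw [hμ]
    _ = μ {x | rank x j < k} := by
        rw [Measure.map_apply hσ (measurableSet_rank_lt _ _)]
        congr 1 with x
        change rank (fun l => x (Equiv.swap i j l)) i < k ↔ rank x j < k
        rw [rank_comp_perm, Equiv.swap_apply_left]

end Exchangeable

open Classical in
lemma sum_measure_le_of_ae_card_le {X ι : Type*} [MeasurableSpace X] [Fintype ι] {μ : Measure X}
    {A : ι → Set X} (hA : ∀ j, MeasurableSet (A j)) {k : ℕ}
    (h : ∀ᵐ x ∂μ, #{j | x ∈ A j} ≤ k) : ∑ j, μ (A j) ≤ k * μ univ := by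
  calc ∑ j, μ (A j) = ∫⁻ x, ∑ j, (A j).indicator 1 x ∂μ := by
        rw [lintegral_finsetSum _ fun j _ => measurable_one.indicator (hA j)]
        simp only [lintegral_indicator_one (hA _)]
    _ ≤ ∫⁻ _, (k : ℝ≥0∞) ∂μ := lintegral_mono_ae <| h.mono fun x hx => by
        simpa [Set.indicator_apply, Finset.sum_boole] using hx
    _ = k * μ univ := lintegral_const _

theorem stmt1_general {Ω : Type*} [MeasurableSpace Ω] (P : Measure Ω) [IsProbabilityMeasure P]
    (n : ℕ) (V : Fin (n + 1) → Ω → ℝ) (hmeas : ∀ i, Measurable (V i))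
    (hexch : ∀ σ : Equiv.Perm (Fin (n + 1)),
      Measure.map (fun ω i => V (σ i) ω) P = Measure.map (fun ω i => V i ω) P)
    (hties : P {ω | ∃ i j, i ≠ j ∧ V i ω = V j ω} = 0)
    (β : ℝ) :
    P {ω | (V (Fin.last n) ω : EReal) ≤
        quantileE β (empE (Fin.snoc (fun i : Fin n => ((V i.castSucc ω : ℝ) : EReal)) ⊤))}
      ≤ ENNReal.ofReal (β + 1 / (n + 1)) := by
  set k := ⌈β * (n + 1 : ℕ)⌉₊
  have hJ : Measurable fun ω i => V i ω := measurable_pi_lambda _ hmeas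
  set μ := P.map fun ω i => V i ω
  have hμ (σ : Equiv.Perm (Fin (n + 1))) : μ.map (fun x i => x (σ i)) = μ := by
    rw [Measure.map_map (measurable_pi_lambda _ fun i => measurable_pi_apply _) hJ]
    exact hexch σ
  have : IsProbabilityMeasure μ := Measure.isProbabilityMeasure_map hJ.aemeasurable
  have hnoties : ∀ᵐ x ∂μ, Function.Injective x := by
    have hties' : μ {x | ∃ i j, i ≠ j ∧ x i = x j} = 0 := by
      rwa [Measure.map_apply hJ measurableSet_exists_ne_eq]
    filter_upwards [measure_eq_zero_iff_ae_notMem.1 hties'] with x hx a b hab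
    by_contra hne
    exact hx ⟨a, b, hne, hab⟩
  have hsum := sum_measure_le_of_ae_card_le (fun j => measurableSet_rank_lt j k)
    (hnoties.mono fun x hx => by simpa using card_rank_lt_le hx k)
  simp only [measure_rank_lt_eq hμ _ (Fin.last n), sum_const, card_univ, Fintype.card_fin,
    nsmul_eq_mul, measure_univ, mul_one] at hsum
  calc _ ≤ μ {x | rank x (Fin.last n) < k} := by
        rw [Measure.map_apply hJ (measurableSet_rank_lt _ _)]
        exact measure_mono fun ω hω => rank_last_lt_of_le_quantileE hω
    _ ≤ k / (n + 1 : ℕ) := by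
        rw [ENNReal.le_div_iff_mul_le (by simp) (by simp), mul_comm]
        exact hsum
    _ ≤ ENNReal.ofReal (β + 1 / (n + 1)) := by
        simpa [k] using natCeil_div_le_ofReal β n.succ_pos

theorem stmt1 {Ω : Type*} [MeasurableSpace Ω] (P : Measure Ω) [IsProbabilityMeasure P]
    (n : ℕ) (V : Fin (n + 1) → Ω → ℝ) (hmeas : ∀ i, Measurable (V i))
    (hexch : ∀ σ : Equiv.Perm (Fin (n + 1)),
      Measure.map (fun ω i => V (σ i) ω) P = Measure.map (fun ω i => V i ω) P)
    (hties : P {ω | ∃ i j, i ≠ j ∧ V i ω = V j ω} = 0)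
    (β : ℝ) (hβ : β ∈ Set.Ioo (0 : ℝ) 1) :
    P {ω | (V (Fin.last n) ω : EReal) ≤
        quantileE β (empE (Fin.snoc (fun i : Fin n => ((V i.castSucc ω : ℝ) : EReal)) ⊤))}
      ≤ ENNReal.ofReal (β + 1 / (n + 1)) :=
  stmt1_general P n V hmeas hexch hties β
end

section
/- For real numbers v_1, ..., v_{n+1} and β ∈ (0,1), the event v_{n+1} ≤ Quantile(β; {v_1,...,v_n} ∪ {∞}) holds if and only if v_{n+1} ≤ Quantile(β; {v_1,...,v_{n+1}}). -/
open MeasureTheory Set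

/-!
Whether `w ≤ quantileE β F` holds depends only on the masses `F (Iic z)` for `z < w`. For such `z`,
replacing the atom `w = v (Fin.last n)` by `⊤` does not change these masses: neither atom lies in
`Iic z`.
-/

lemma le_quantileE_iff {w : EReal} {β : ℝ} {F : Measure EReal} :
    w ≤ quantileE β F ↔ ∀ z < w, F (Iic z) < ENNReal.ofReal β := by
  simp only [quantileE, le_sInf_iff, mem_ofPred_eq]
  exact ⟨fun h z hz => not_le.1 fun hF => (h z hF).not_gt hz,
    fun h z hF => not_lt.1 fun hz => (h z hz).not_ge hF⟩

lemma le_quantileE_congr {w : EReal} {β : ℝ} {F G : Measure EReal}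
    (h : ∀ z < w, F (Iic z) = G (Iic z)) : w ≤ quantileE β F ↔ w ≤ quantileE β G := by
  simp only [le_quantileE_iff]
  exact forall₂_congr fun z hz => by rw [h z hz]

lemma wEmp_apply_Iic_congr {m : ℕ} (p : Fin m → ℝ) {v v' : Fin m → EReal} {z : EReal}
    (h : ∀ i, v i ≤ z ↔ v' i ≤ z) : wEmp p v (Iic z) = wEmp p v' (Iic z) := by
  simp only [wEmp, Measure.finsetSum_apply, Measure.smul_apply,
    Measure.dirac_apply' _ measurableSet_Iic, indicator_apply, mem_Iic, h, Pi.one_apply]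

theorem stmt2_general (n : ℕ) (v : Fin (n + 1) → ℝ) (β : ℝ) :
    ((v (Fin.last n) : EReal) ≤
        quantileE β (empE (Fin.snoc (fun i : Fin n => ((v i.castSucc : ℝ) : EReal)) ⊤))) ↔
      ((v (Fin.last n) : EReal) ≤ quantileE β (empE (fun i => ((v i : ℝ) : EReal)))) := by
  refine le_quantileE_congr fun z hz => wEmp_apply_Iic_congr _ fun i => ?_
  refine Fin.lastCases ?_ (fun j => ?_) i
  · simp only [Fin.snoc_last]
    exact iff_of_false (fun h => not_top_lt (h.trans_lt hz)) hz.not_ge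
  · simp only [Fin.snoc_castSucc]

theorem stmt2 (n : ℕ) (v : Fin (n + 1) → ℝ) (β : ℝ) (hβ : β ∈ Set.Ioo (0 : ℝ) 1) :
    ((v (Fin.last n) : EReal) ≤
        quantileE β (empE (Fin.snoc (fun i : Fin n => ((v i.castSucc : ℝ) : EReal)) ⊤))) ↔
      ((v (Fin.last n) : EReal) ≤ quantileE β (empE (fun i => ((v i : ℝ) : EReal)))) :=
  stmt2_general n v β
end

section
/- If V_1,...,V_{n+1} are exchangeable random variables whose values are almost surely distinct, then for any β ∈ (0,1), P(V_{n+1} ≤ Quantile(β; empirical distribution of V_1,...,V_{n+1})) = ⌈β(n+1)⌉/(n+1). -/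
/-!
On the event that the values are distinct, `V_{n+1}` lies below the empirical β-quantile exactly
when its rank among `V_1, …, V_{n+1}` is at most `k = ⌈β(n+1)⌉`. Distinct values have ranks
`1, …, n+1` in some order, so exactly `k` indices have rank at most `k`; by exchangeability every
index does so with the same probability, which is therefore `k/(n+1)`.
-/

open MeasureTheory Set

open scoped Finset ENNReal

section Rank

variable {ι α : Type*} [Fintype ι] [LinearOrder α]

def tupleRank (v : ι → α) (j : ι) : ℕ := #{i | v i ≤ v j}

lemma tupleRank_comp_equiv (v : ι → α) (σ : ι ≃ ι) (j : ι) :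
    tupleRank (v ∘ σ) j = tupleRank v (σ j) := by
  simp only [tupleRank, Finset.card_filter, Function.comp_apply]
  exact σ.sum_comp (fun i => if v i ≤ v (σ j) then 1 else 0)

lemma tupleRank_pos (v : ι → α) (j : ι) : 0 < tupleRank v j :=
  Finset.card_pos.mpr ⟨j, by simp⟩

lemma tupleRank_lt_of_lt {v : ι → α} {a b : ι} (h : v a < v b) :
    tupleRank v a < tupleRank v b := by
  refine Finset.card_lt_card ⟨fun i hi => ?_, fun hsub => ?_⟩
  · simp only [Finset.mem_filter, Finset.mem_univ, true_and] at hi ⊢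
    exact hi.trans h.le
  · have := hsub (Finset.mem_filter.mpr ⟨Finset.mem_univ b, le_rfl⟩)
    exact (Finset.mem_filter.mp this).2.not_gt h

lemma tupleRank_injective {v : ι → α} (hv : Function.Injective v) :
    Function.Injective (tupleRank v) := by
  intro a b hab
  rcases lt_trichotomy (v a) (v b) with h | h | h
  · exact absurd hab (tupleRank_lt_of_lt h).ne
  · exact hv h
  · exact absurd hab (tupleRank_lt_of_lt h).ne'

lemma tupleRank_le_card_lt_add_one {v : ι → α} (hv : Function.Injective v) (j : ι) :
    tupleRank v j ≤ #{i | v i < v j} + 1 := by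
  classical
  refine (Finset.card_le_card fun i hi => ?_).trans (Finset.card_insert_le j _)
  simp only [Finset.mem_filter, Finset.mem_univ, true_and, Finset.mem_insert] at hi ⊢
  rcases hi.lt_or_eq with h | h
  · exact Or.inr h
  · exact Or.inl (hv h)

lemma image_tupleRank {v : ι → α} (hv : Function.Injective v) :
    Finset.univ.image (tupleRank v) = Finset.Icc 1 (Fintype.card ι) := by
  classical
  refine Finset.eq_of_subset_of_card_le (fun r hr => ?_) ?_
  · obtain ⟨j, -, rfl⟩ := Finset.mem_image.mp hr
    exact Finset.mem_Icc.mpr ⟨tupleRank_pos v j, Finset.card_le_univ _⟩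
  · rw [Finset.card_image_of_injective _ (tupleRank_injective hv)]
    simp

lemma card_tupleRank_le {v : ι → α} (hv : Function.Injective v) {k : ℕ}
    (hk : k ≤ Fintype.card ι) : #{j | tupleRank v j ≤ k} = k := by
  classical
  calc #{j | tupleRank v j ≤ k}
      = #((Finset.univ.image (tupleRank v)).filter (· ≤ k)) := by
        rw [Finset.filter_image, Finset.card_image_of_injective _ (tupleRank_injective hv)]
    _ = #(Finset.Icc 1 k) := by
        rw [image_tupleRank hv]
        congr 1
        ext r
        simp only [Finset.mem_filter, Finset.mem_Icc]
        omega
    _ = k := by simp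

lemma measurable_tupleRank [TopologicalSpace α] [MeasurableSpace α] [OrderClosedTopology α]
    [SecondCountableTopology α] [OpensMeasurableSpace α] (j : ι) :
    Measurable fun v : ι → α => tupleRank v j := by
  simp only [tupleRank, Finset.card_filter]
  exact Finset.measurable_sum _ fun i _ => Measurable.ite
    (measurableSet_le (measurable_pi_apply i) (measurable_pi_apply j))
    measurable_const measurable_const

lemma tupleRank_comp_strictMono {β : Type*} [LinearOrder β] {f : α → β} (hf : StrictMono f)
    (v : ι → α) : tupleRank (f ∘ v) = tupleRank v := by
  ext j
  simp [tupleRank, hf.le_iff_le]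

end Rank

section Quantile

variable {m : ℕ}

lemma empE_Iic (v : Fin m → EReal) (z : EReal) :
    empE v (Iic z) = ENNReal.ofReal (1 / m) * #{i | v i ≤ z} := by
  simp only [empE, wEmp, Measure.coe_finsetSum, Finset.sum_apply, Measure.smul_apply,
    smul_eq_mul, Measure.dirac_apply' _ measurableSet_Iic, ← Finset.mul_sum,
    Finset.card_filter, Nat.cast_sum]
  congr 1
  refine Finset.sum_congr rfl fun i _ => ?_
  by_cases h : v i ≤ z <;> simp [h]

lemma ofReal_le_empE_Iic_iff (hm : 0 < m) (β : ℝ) (v : Fin m → EReal) (z : EReal) :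
    ENNReal.ofReal β ≤ empE v (Iic z) ↔ ⌈β * m⌉₊ ≤ #{i | v i ≤ z} := by
  rw [empE_Iic, ← ENNReal.ofReal_natCast, ← ENNReal.ofReal_mul (by positivity),
    ENNReal.ofReal_le_ofReal_iff (by positivity), Nat.ceil_le, one_div_mul_eq_div,
    le_div_iff₀ (by positivity)]

lemma le_quantileE_empE_iff {β : ℝ} (hβ : 0 < β) {v : Fin m → EReal}
    (hv : Function.Injective v) (x : Fin m) :
    v x ≤ quantileE β (empE v) ↔ tupleRank v x ≤ ⌈β * m⌉₊ := by
  have hm : 0 < m := x.pos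
  simp only [quantileE, le_sInf_iff, mem_ofPred_eq, ofReal_le_empE_Iic_iff hm]
  constructor
  · intro h
    by_contra! hlt
    have hk : 0 < ⌈β * m⌉₊ := Nat.ceil_pos.mpr (by positivity)
    have hbelow : ⌈β * m⌉₊ ≤ #{i | v i < v x} := by
      have := tupleRank_le_card_lt_add_one hv x
      omega
    obtain ⟨i₀, hi₀, hmax⟩ := Finset.exists_max_image {i | v i < v x} v
      (Finset.card_pos.mp (hk.trans_le hbelow))
    have hcount : ⌈β * m⌉₊ ≤ #{i | v i ≤ v i₀} :=
      hbelow.trans (Finset.card_le_card fun i hi => by simpa using hmax i hi)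
    exact (Finset.mem_filter.mp hi₀).2.not_ge (h _ hcount)
  · intro h z hz
    by_contra! hzx
    refine (h.trans hz).not_gt (Finset.card_lt_card ⟨fun i hi => ?_, fun hsub => ?_⟩)
    · simp only [Finset.mem_filter, Finset.mem_univ, true_and] at hi ⊢
      exact hi.trans hzx.le
    · exact (Finset.mem_filter.mp (hsub (by simp))).2.not_gt hzx

end Quantile

section Exchangeable

variable {Ω ι : Type*} [MeasurableSpace Ω] [Fintype ι]

lemma sum_measure_eq_of_ae_card_eq (μ : Measure Ω) {p : ι → Ω → Prop}
    [∀ ω, DecidablePred (p · ω)] (hp : ∀ j, MeasurableSet {ω | p j ω}) {k : ℕ}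
    (hk : ∀ᵐ ω ∂μ, #{j | p j ω} = k) :
    ∑ j, μ {ω | p j ω} = k * μ univ := by
  calc ∑ j, μ {ω | p j ω}
      = ∑ j, ∫⁻ ω, {ω | p j ω}.indicator 1 ω ∂μ := by simp [lintegral_indicator (hp _)]
    _ = ∫⁻ ω, ∑ j, {ω | p j ω}.indicator 1 ω ∂μ :=
        (lintegral_finsetSum _ fun j _ => measurable_one.indicator (hp j)).symm
    _ = ∫⁻ _, (k : ℝ≥0∞) ∂μ := lintegral_congr_ae <| hk.mono fun ω hω => by
        simp [Set.indicator_apply, Finset.sum_boole, hω]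
    _ = k * μ univ := lintegral_const _

variable {α : Type*} [LinearOrder α] [TopologicalSpace α] [MeasurableSpace α]
  [OrderClosedTopology α] [SecondCountableTopology α] [OpensMeasurableSpace α]
  (P : Measure Ω) (V : ι → Ω → α)

lemma measure_tupleRank_le_eq_of_exchangeable (hmeas : ∀ i, Measurable (V i))
    (hexch : ∀ σ : Equiv.Perm ι, P.map (fun ω i => V (σ i) ω) = P.map (fun ω i => V i ω))
    (k : ℕ) (j j' : ι) :
    P {ω | tupleRank (V · ω) j ≤ k} = P {ω | tupleRank (V · ω) j' ≤ k} := by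
  classical
  let σ := Equiv.swap j j'
  have hA : MeasurableSet {v : ι → α | tupleRank v j' ≤ k} :=
    measurable_tupleRank j' measurableSet_Iic
  have hpermuted : {ω | tupleRank (V · ω) j ≤ k}
      = (fun ω i => V (σ i) ω) ⁻¹' {v | tupleRank v j' ≤ k} := by
    ext ω
    change _ ↔ tupleRank ((V · ω) ∘ σ) j' ≤ k
    simp [tupleRank_comp_equiv, σ]
  have hV : Measurable fun ω i => V i ω := measurable_pi_lambda _ hmeas
  rw [hpermuted, ← Measure.map_apply (measurable_pi_lambda _ fun i => hmeas (σ i)) hA, hexch,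
    Measure.map_apply hV hA]
  rfl

lemma measure_tupleRank_le_of_exchangeable [IsProbabilityMeasure P]
    (hmeas : ∀ i, Measurable (V i))
    (hexch : ∀ σ : Equiv.Perm ι, P.map (fun ω i => V (σ i) ω) = P.map (fun ω i => V i ω))
    (hinj : ∀ᵐ ω ∂P, Function.Injective (V · ω)) {k : ℕ} (hk : k ≤ Fintype.card ι)
    (j : ι) :
    P {ω | tupleRank (V · ω) j ≤ k} = k / Fintype.card ι := by
  have hsum := sum_measure_eq_of_ae_card_eq P (p := fun j' ω => tupleRank (V · ω) j' ≤ k)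
    (fun j' => (measurable_tupleRank j').comp (measurable_pi_lambda _ hmeas) measurableSet_Iic)
    (hinj.mono fun ω hω => card_tupleRank_le hω hk)
  simp only [measure_tupleRank_le_eq_of_exchangeable P V hmeas hexch k _ j, Finset.sum_const,
    Finset.card_univ, nsmul_eq_mul, measure_univ, mul_one] at hsum
  rw [ENNReal.eq_div_iff (by simpa using Fintype.card_pos_iff.mpr ⟨j⟩ |>.ne') (by simp), hsum]

end Exchangeable

theorem stmt5 {Ω : Type*} [MeasurableSpace Ω] (P : Measure Ω) [IsProbabilityMeasure P]
    (n : ℕ) (V : Fin (n + 1) → Ω → ℝ) (hmeas : ∀ i, Measurable (V i))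
    (hexch : ∀ σ : Equiv.Perm (Fin (n + 1)),
      Measure.map (fun ω i => V (σ i) ω) P = Measure.map (fun ω i => V i ω) P)
    (hties : P {ω | ∃ i j, i ≠ j ∧ V i ω = V j ω} = 0)
    (β : ℝ) (hβ : β ∈ Set.Ioo (0 : ℝ) 1) :
    P {ω | (V (Fin.last n) ω : EReal) ≤
        quantileE β (empE (fun i => ((V i ω : ℝ) : EReal)))}
      = ENNReal.ofReal ((⌈β * (n + 1)⌉₊ : ℝ) / (n + 1)) := by
  obtain ⟨hβ0, hβ1⟩ := hβ
  set k := ⌈β * ((n + 1 : ℕ) : ℝ)⌉₊ with hk_def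
  have hk : k ≤ Fintype.card (Fin (n + 1)) := by
    rw [Fintype.card_fin, Nat.ceil_le]
    push_cast
    nlinarith
  have hinj : ∀ᵐ ω ∂P, Function.Injective (V · ω) :=
    (measure_eq_zero_iff_ae_notMem.mp hties).mono fun ω hω i j hij =>
      by_contra fun hne => hω ⟨i, j, hne, hij⟩
  have hevent : {ω | (V (Fin.last n) ω : EReal) ≤ quantileE β (empE fun i => (V i ω : EReal))}
      =ᵐ[P] {ω | tupleRank (V · ω) (Fin.last n) ≤ k} := hinj.mono fun ω hω => by
    change _ = (tupleRank (V · ω) (Fin.last n) ≤ k)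
    rw [← tupleRank_comp_strictMono EReal.coe_strictMono]
    exact propext (le_quantileE_empE_iff hβ0 (EReal.coe_injective.comp hω) _)
  rw [measure_congr hevent, measure_tupleRank_le_of_exchangeable P V hmeas hexch hinj hk,
    Fintype.card_fin, ENNReal.ofReal_div_of_pos (by positivity), ENNReal.ofReal_natCast,
    ← Nat.cast_succ, ENNReal.ofReal_natCast, hk_def, Nat.cast_succ]
end
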